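/- arXiv:math/0111207 — 2 statements merged into one kernel-verified Lean document; each statement's English description precedes it below -/
import Mathlib

section
/- Let K be a field of characteristic 2. The point (1,0,0,0,0,0,0) does not satisfy q(z) = 0, so the projection π : (z0:z1:...:z6) ↦ (z1:...:z6) from this point is defined at every K-point of the quadric Q5 = {q = 0}. Moreover, for every nonzero x in K^6, dropping the first coordinate of f(x) yields (x0^2, x1^2, x2^2, x3^2, x4^2, x5^2), which is nonzero; hence the composition π ∘ f : P^5(K) → P^5(K) equals the Frobenius map φ sending (x0:...:x5) to (x0^2:...:x5^2). In other words, the Frobenius morphism of P^5 factors through f. -/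
/-- The quadratic form `q(z0,...,z6) = z0^2 + z1*z2 + z3*z4 + z5*z6`. -/
def q {K : Type*} [CommRing K] (z : Fin 7 → K) : K :=
  z 0 ^ 2 + z 1 * z 2 + z 3 * z 4 + z 5 * z 6

/-- The map `f(x0,...,x5) = (x0*x1 + x2*x3 + x4*x5, x0^2, ..., x5^2)`. -/
def f {K : Type*} [CommRing K] (x : Fin 6 → K) : Fin 7 → K :=
  ![x 0 * x 1 + x 2 * x 3 + x 4 * x 5,
    x 0 ^ 2, x 1 ^ 2, x 2 ^ 2, x 3 ^ 2, x 4 ^ 2, x 5 ^ 2]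

/-- The projection from the point `(1:0:...:0)`, dropping the first coordinate. -/
def projPi {K : Type*} (z : Fin 7 → K) : Fin 6 → K := fun i => z i.succ

/-- The Frobenius map on 6-tuples, squaring each coordinate. -/
def frob {K : Type*} [CommRing K] (x : Fin 6 → K) : Fin 6 → K := fun i => x i ^ 2

lemma proj_eq_frob {K : Type*} [CommRing K] (x : Fin 6 → K) : projPi (f x) = frob x := by
  funext i
  fin_cases i <;> rfl

theorem stmt_2 {K : Type*} [Field K] [CharP K 2] :
    -- the center of projection `(1,0,0,0,0,0,0)` is not on the quadric
    q (fun i : Fin 7 => if i = 0 then (1 : K) else 0) ≠ 0 ∧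
    -- dropping the first coordinate of `f x` gives the coordinatewise square,
    -- which is nonzero whenever `x ≠ 0`
    (∀ x : Fin 6 → K, x ≠ 0 → projPi (f x) = frob x ∧ frob x ≠ 0) ∧
    -- hence `π ∘ f` equals the Frobenius map on `P^5(K)`
    (∀ (x : Fin 6 → K) (_ : x ≠ 0)
        (h1 : projPi (f x) ≠ 0) (h2 : frob x ≠ 0),
      Projectivization.mk K (projPi (f x)) h1 = Projectivization.mk K (frob x) h2) := by
  have hfrob : ∀ x : Fin 6 → K, x ≠ 0 → frob x ≠ 0 := by
    intro x hx h
    apply hx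
    funext i
    have := congrFun h i
    simpa [frob] using this
  refine ⟨by simp [q], fun x hx => ⟨proj_eq_frob x, hfrob x hx⟩, fun x hx h1 h2 => ?_⟩
  simp [proj_eq_frob]
end

section
/- Let K be an algebraically closed field of characteristic 2. For every z = (z0,...,z6) in K^7 satisfying q(z) = z0^2 + z1*z2 + z3*z4 + z5*z6 = 0, there exists a unique x = (x0,...,x5) in K^6 with f(x) = z; moreover, if z ≠ 0 then x ≠ 0. Consequently f induces a bijection from P^5(K) onto the set of K-points of the quadric Q5 = {q = 0} in P^6(K). -/
set_option linter.unusedSectionVars false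


section Helpers
variable {K : Type*} [Field K] [IsAlgClosed K] [CharP K 2]

lemma f0 (x : Fin 6 → K) : f x 0 = x 0 * x 1 + x 2 * x 3 + x 4 * x 5 := rfl
lemma f1 (x : Fin 6 → K) : f x 1 = x 0 ^ 2 := rfl
lemma f2 (x : Fin 6 → K) : f x 2 = x 1 ^ 2 := rfl
lemma f3 (x : Fin 6 → K) : f x 3 = x 2 ^ 2 := rfl
lemma f4 (x : Fin 6 → K) : f x 4 = x 3 ^ 2 := rfl
lemma f5 (x : Fin 6 → K) : f x 5 = x 4 ^ 2 := rfl
lemma f6 (x : Fin 6 → K) : f x 6 = x 5 ^ 2 := rfl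

lemma sq_inj : Function.Injective (fun t : K => t ^ 2) := by
  intro a b hab
  exact frobenius_inj K 2 (by simpa [frobenius_def] using hab)

lemma exists_sq (t : K) : ∃ s : K, s ^ 2 = t :=
  IsAlgClosed.exists_pow_nat_eq t (n := 2) (by norm_num)

lemma two_zero : (2 : K) = 0 := by
  have := CharP.cast_eq_zero K 2; exact_mod_cast this

lemma q_f (x : Fin 6 → K) : q (f x) = 0 := by
  have h2 : (2 : K) = 0 := two_zero
  simp only [q, f0, f1, f2, f3, f4, f5, f6]
  linear_combination (x 0^2*x 1^2 + x 2^2*x 3^2 + x 4^2*x 5^2 + x 0*x 1*x 2*x 3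
    + x 0*x 1*x 4*x 5 + x 2*x 3*x 4*x 5) * h2

lemma key (z : Fin 7 → K) (hz : q z = 0) : ∃! x : Fin 6 → K, f x = z := by
  have h2 : (2 : K) = 0 := two_zero
  choose r hr using exists_sq (K := K)
  set x : Fin 6 → K := ![r (z 1), r (z 2), r (z 3), r (z 4), r (z 5), r (z 6)] with hx
  have hx0 : x 0 = r (z 1) := rfl
  have hx1 : x 1 = r (z 2) := rfl
  have hx2 : x 2 = r (z 3) := rfl
  have hx3 : x 3 = r (z 4) := rfl
  have hx4 : x 4 = r (z 5) := rfl
  have hx5 : x 5 = r (z 6) := rfl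
  have hsq : ∀ i : Fin 6, x i ^ 2 = z i.succ := by
    intro i
    fin_cases i <;> simp [hx0, hx1, hx2, hx3, hx4, hx5, hr] <;> rfl
  have hfx : f x = z := by
    funext i
    fin_cases i
    · show f x 0 = z 0
      rw [f0]
      apply sq_inj
      show (x 0 * x 1 + x 2 * x 3 + x 4 * x 5) ^ 2 = z 0 ^ 2
      have e1 := hsq 0; have e2 := hsq 1; have e3 := hsq 2
      have e4 := hsq 3; have e5 := hsq 4; have e6 := hsq 5
      simp only [Fin.succ] at e1 e2 e3 e4 e5 e6
      have h1 : x 0 ^ 2 = z 1 := e1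
      have hh2 : x 1 ^ 2 = z 2 := e2
      have h3 : x 2 ^ 2 = z 3 := e3
      have h4 : x 3 ^ 2 = z 4 := e4
      have h5 : x 4 ^ 2 = z 5 := e5
      have h6 : x 5 ^ 2 = z 6 := e6
      simp only [q] at hz
      linear_combination x 1^2*h1 + z 1*hh2 + x 3^2*h3 + z 3*h4 + x 5^2*h5 + z 5*h6 - hz
        + (x 0*x 1*x 2*x 3 + x 0*x 1*x 4*x 5 + x 2*x 3*x 4*x 5 + z 1*z 2 + z 3*z 4 + z 5*z 6) * h2
    · exact (f1 x).trans (hsq 0)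
    · exact (f2 x).trans (hsq 1)
    · exact (f3 x).trans (hsq 2)
    · exact (f4 x).trans (hsq 3)
    · exact (f5 x).trans (hsq 4)
    · exact (f6 x).trans (hsq 5)
  refine ⟨x, hfx, ?_⟩
  intro y hy
  have h7 : f y = f x := hy.trans hfx.symm
  funext j
  apply sq_inj
  show y j ^ 2 = x j ^ 2
  fin_cases j
  · exact congrFun h7 1
  · exact congrFun h7 2
  · exact congrFun h7 3
  · exact congrFun h7 4
  · exact congrFun h7 5
  · exact congrFun h7 6

lemma f_injective : Function.Injective (f (K := K)) := by
  intro a b hab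
  obtain ⟨x, -, hu⟩ := key (f b) (q_f b)
  exact (hu a hab).trans (hu b rfl).symm

lemma f_zero : f (0 : Fin 6 → K) = 0 := by
  funext i; fin_cases i <;> simp [f0, f1, f2, f3, f4, f5, f6]

lemma f_eq_zero_iff (x : Fin 6 → K) : f x = 0 ↔ x = 0 := by
  constructor
  · intro h; exact f_injective (h.trans f_zero.symm)
  · rintro rfl; exact f_zero

lemma f_smul (c : K) (x : Fin 6 → K) : f (c • x) = (c ^ 2) • f x := by
  funext i
  fin_cases i <;>
    simp [f0, f1, f2, f3, f4, f5, f6, Pi.smul_apply, smul_eq_mul] <;> ring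

lemma q_smul (c : K) (z : Fin 7 → K) : q (c • z) = c ^ 2 * q z := by
  simp only [q, Pi.smul_apply, smul_eq_mul]; ring

end Helpers

theorem stmt_3 {K : Type*} [Field K] [IsAlgClosed K] [CharP K 2] :
    -- every point of the affine cone over `Q5` has a unique preimage under `f`,
    -- which is nonzero when the point is nonzero
    (∀ z : Fin 7 → K, q z = 0 →
      (∃! x : Fin 6 → K, f x = z) ∧ (z ≠ 0 → ∀ x : Fin 6 → K, f x = z → x ≠ 0)) ∧
    -- hence `f` induces a bijection from `P^5(K)` onto the `K`-points of `Q5 ⊂ P^6(K)`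
    (∃ e : Projectivization K (Fin 6 → K) ≃
        {p : Projectivization K (Fin 7 → K) // q p.rep = 0},
      ∀ (x : Fin 6 → K) (hx : x ≠ 0) (hfx : f x ≠ 0),
        (e (Projectivization.mk K x hx) : Projectivization K (Fin 7 → K)) =
          Projectivization.mk K (f x) hfx) := by
  constructor
  · intro z hz
    refine ⟨key z hz, ?_⟩
    rintro hzne x hfx rfl
    exact hzne (hfx.symm.trans f_zero)
  · -- q of the rep of mk of any vector w with q w = 0 is 0
    have qrep : ∀ (w : Fin 7 → K) (hw : w ≠ 0), q w = 0 →
        q (Projectivization.mk K w hw).rep = 0 := by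
      intro w hw hq
      have h := Projectivization.mk_rep (Projectivization.mk K w hw)
      rw [Projectivization.mk_eq_mk_iff] at h
      obtain ⟨a, ha⟩ := h
      rw [← ha, Units.smul_def, q_smul, hq, mul_zero]
    -- mk (f v) = mk (f w) whenever mk v = mk w  (reps differ by scalar)
    have mkf : ∀ (v w : Fin 6 → K) (hv : v ≠ 0) (hw : w ≠ 0),
        Projectivization.mk K v hv = Projectivization.mk K w hw →
        Projectivization.mk K (f v) (fun h => hv (f_injective (h.trans f_zero.symm))) =
        Projectivization.mk K (f w) (fun h => hw (f_injective (h.trans f_zero.symm))) := by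
      intro v w hv hw h
      rw [Projectivization.mk_eq_mk_iff] at h ⊢
      obtain ⟨a, ha⟩ := h
      refine ⟨a ^ 2, ?_⟩
      rw [← ha, Units.smul_def, Units.smul_def, Units.val_pow_eq_pow_val, ← f_smul]
    set φ : Projectivization K (Fin 6 → K) →
        {p : Projectivization K (Fin 7 → K) // q p.rep = 0} :=
      fun p => ⟨Projectivization.mk K (f p.rep)
        (fun h => p.rep_nonzero (f_injective (h.trans f_zero.symm))),
        qrep _ _ (q_f p.rep)⟩ with hφ
    have hφmk : ∀ (x : Fin 6 → K) (hx : x ≠ 0),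
        (φ (Projectivization.mk K x hx) : Projectivization K (Fin 7 → K)) =
        Projectivization.mk K (f x) (fun h => hx (f_injective (h.trans f_zero.symm))) := by
      intro x hx
      exact mkf _ _ _ _ (Projectivization.mk_rep _)
    have hbij : Function.Bijective φ := by
      constructor
      · intro p p' h
        have h' : Projectivization.mk K (f p.rep) _ = Projectivization.mk K (f p'.rep) _ :=
          congrArg Subtype.val h
        rw [Projectivization.mk_eq_mk_iff] at h'
        obtain ⟨a, ha⟩ := h'
        obtain ⟨s, hs⟩ := exists_sq (a : K)
        have hfeq : f (s • p'.rep) = f p.rep := by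
          rw [f_smul, hs, ← Units.smul_def, ha]
        have := f_injective hfeq
        have hs0 : s ≠ 0 := by
          rintro rfl
          exact a.ne_zero (by rw [← hs]; ring)
        have : Projectivization.mk K p.rep p.rep_nonzero =
            Projectivization.mk K p'.rep p'.rep_nonzero := by
          rw [Projectivization.mk_eq_mk_iff]
          exact ⟨Units.mk0 s hs0, this⟩
        rwa [Projectivization.mk_rep, Projectivization.mk_rep] at this
      · rintro ⟨P, hP⟩
        obtain ⟨x, hfx, -⟩ := key P.rep hP
        have hx : x ≠ 0 := by
          rintro rfl
          exact P.rep_nonzero (hfx.symm.trans f_zero)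
        refine ⟨Projectivization.mk K x hx, ?_⟩
        apply Subtype.ext
        rw [hφmk x hx]
        have : Projectivization.mk K (f x) (fun h => hx (f_injective (h.trans f_zero.symm))) =
            Projectivization.mk K P.rep P.rep_nonzero := by
          congr 1
        rw [this, Projectivization.mk_rep]
    refine ⟨Equiv.ofBijective φ hbij, ?_⟩
    intro x hx hfx
    exact hφmk x hx
end
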